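/- Let V be a finite-dimensional real inner product space and let p ∈ V with 0 < ‖p‖ < 1. Let Z be the Randers norm with Zermelo data (⟨·,·⟩, p) (wind W = p). If v ∈ V with v ≠ 0 satisfies g_v(v,u) = ⟨2p, u⟩ for all u ∈ V (i.e., v is the Z-gradient at p of the function f(x) = ‖x‖², whose Riemannian gradient at p is 2p), then Z(v) = 2‖p‖ + 2‖p‖². In particular Z(v)² = 𝔟(f(p)) where 𝔟(t) = (2√t + 2t)², so f is Z-transnormal on the unit disc with this 𝔟, and 𝔟 is not C² at 0. -/

import Mathlib

open scoped RealInnerProductSpace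
open Classical

/-- The Randers norm with Zermelo data `(⟪·,·⟫, W)` on a real inner product space:
`Z(0) = 0` and, for `v ≠ 0`,
`Z(v) = (√(⟪W,v⟫² + (1 − ‖W‖²)‖v‖²) − ⟪W,v⟫)/(1 − ‖W‖²)`. -/
noncomputable def randers {V : Type*} [NormedAddCommGroup V] [InnerProductSpace ℝ V]
    (W : V) (v : V) : ℝ :=
  if v = 0 then 0
  else (Real.sqrt (⟪W, v⟫ ^ 2 + (1 - ‖W‖ ^ 2) * ‖v‖ ^ 2) - ⟪W, v⟫) / (1 - ‖W‖ ^ 2)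

/-- The fundamental tensor of a (Minkowski) norm `F` at the point `v`, evaluated on the
pair of vectors `(u, w)`: one half of the second Fréchet derivative of `F²` at `v`. -/
noncomputable def fundamentalTensor {V : Type*} [NormedAddCommGroup V] [NormedSpace ℝ V]
    (F : V → ℝ) (v u w : V) : ℝ :=
  (1 / 2) * iteratedFDeriv ℝ 2 (fun x => F x ^ 2) v ![u, w]

/-!
Since `Z` is positively homogeneous, Euler's relation for the 2-homogeneous `Z²` gives
`g_v(v, ·) = Z(v) dZ_v`, so the hypothesis reads `Z(v) dZ_v = ⟪2p, ·⟫`. Differentiating the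
Zermelo identity `‖x - Z(x) p‖ = Z(x)` at `v` then shows that `w = v - Z(v) p` is a multiple `c p`.
Now `‖w‖ = Z(v)` and `⟪w, p⟫ = c ‖p‖²` give `|c| ‖p‖ = Z(v)` and `c (Z(v) - 2‖p‖²) = 2 Z(v)`,
whose only solution with `Z(v) > 0` is `Z(v) = 2‖p‖ + 2‖p‖²`.

The function `𝔟(t) = (2√t + 2t)²` is not even differentiable at `0`: both `𝔟` and `t ↦ 𝔟(t) - 4t`
attain their minimum there, which would force `𝔟'(0) = 0` and `𝔟'(0) = 4`.
-/

section Homogeneous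

variable {E : Type*} [NormedAddCommGroup E] [NormedSpace ℝ E]

theorem fderiv_smul_of_homogeneous {G : E → ℝ} {c : ℝ} (hc : c ≠ 0)
    (hG : ∀ x, G (c • x) = c ^ 2 * G x) (x : E) :
    fderiv ℝ G (c • x) = c • fderiv ℝ G x := by
  have h := fderiv_comp_smul (f := G) (x := x) c
  rw [show (G <| c • ·) = (c ^ 2) • G from funext hG, fderiv_const_smul_field, pow_two,
    mul_smul] at h
  exact (smul_right_injective _ hc h).symm

theorem fderiv_fderiv_apply_self_of_homogeneous {G : E → ℝ}
    (hG : ∀ c : ℝ, 0 < c → ∀ x, G (c • x) = c ^ 2 * G x) {x : E}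
    (hx : DifferentiableAt ℝ (fderiv ℝ G) x) :
    fderiv ℝ (fderiv ℝ G) x x = fderiv ℝ G x := by
  have hcurve : HasDerivAt (fun c : ℝ => fderiv ℝ G (c • x)) (fderiv ℝ (fderiv ℝ G) x x) 1 := by
    have hline : HasDerivAt (fun c : ℝ => c • x) x 1 := by
      simpa using (hasDerivAt_id' (1 : ℝ)).smul_const x
    exact hx.hasFDerivAt.comp_hasDerivAt_of_eq 1 hline (one_smul ℝ x).symm
  have hline : HasDerivAt (fun c : ℝ => c • fderiv ℝ G x) (fderiv ℝ G x) 1 := by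
    simpa using (hasDerivAt_id' (1 : ℝ)).smul_const (fderiv ℝ G x)
  refine hcurve.unique (hline.congr_of_eventuallyEq ?_)
  filter_upwards [Ioi_mem_nhds one_pos] with c hc
  exact fderiv_smul_of_homogeneous hc.ne' (hG c hc) x

theorem fundamentalTensor_self_left_eq_mul_fderiv {F : E → ℝ} (hF : ∀ c : ℝ, 0 < c → ∀ x, F (c • x) = c * F x)
    {v : E} (hv : ContDiffAt ℝ 2 F v) (u : E) :
    fundamentalTensor F v v u = F v * fderiv ℝ F v u := by
  have hF2 : ∀ c : ℝ, 0 < c → ∀ x, F (c • x) ^ 2 = c ^ 2 * F x ^ 2 := fun c hc x => by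
    rw [hF c hc, mul_pow]
  have hdiff : DifferentiableAt ℝ (fderiv ℝ fun x => F x ^ 2) v :=
    ((hv.pow 2).fderiv_right le_rfl).differentiableAt one_ne_zero
  rw [fundamentalTensor, iteratedFDeriv_two_apply]
  simp only [Matrix.cons_val_zero, Matrix.cons_val_one]
  rw [fderiv_fderiv_apply_self_of_homogeneous hF2 hdiff,
    ((hv.differentiableAt two_ne_zero).hasFDerivAt.pow 2).fderiv]
  simp only [Nat.add_one_sub_one, pow_one, nsmul_eq_mul, Nat.cast_ofNat, smul_apply,
    smul_eq_mul]
  ring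

end Homogeneous

theorem eq_two_mul_add_two_mul_sq_of_abs_mul_eq {s Z c : ℝ} (hs0 : 0 ≤ s) (hs1 : s ≤ 1)
    (hZ : 0 < Z) (habs : |c| * s = Z) (hc : c * (Z - 2 * s ^ 2) = 2 * Z) :
    Z = 2 * s + 2 * s ^ 2 := by
  rcases abs_cases c with ⟨hc_abs, -⟩ | ⟨hc_abs, -⟩
  · rw [hc_abs] at habs
    have h : Z * (Z - 2 * s ^ 2 - 2 * s) = 0 := by
      linear_combination (Z - 2 * s ^ 2) * habs.symm + s * hc
    linarith [(mul_eq_zero.mp h).resolve_left hZ.ne']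
  · rw [hc_abs] at habs
    have h : Z * (Z - 2 * s ^ 2 + 2 * s) = 0 := by
      linear_combination (Z - 2 * s ^ 2) * habs.symm - s * hc
    nlinarith [(mul_eq_zero.mp h).resolve_left hZ.ne']

section Randers

variable {V : Type*} [NormedAddCommGroup V] {W : V}

theorem one_sub_norm_sq_pos (hW : ‖W‖ < 1) : 0 < 1 - ‖W‖ ^ 2 := by
  nlinarith [norm_nonneg W]

variable [InnerProductSpace ℝ V]

theorem randers_apply (W x : V) :
    randers W x = (√(⟪W, x⟫ ^ 2 + (1 - ‖W‖ ^ 2) * ‖x‖ ^ 2) - ⟪W, x⟫) / (1 - ‖W‖ ^ 2) := by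
  unfold randers
  split_ifs with hx <;> simp [hx]

theorem randers_smul (W x : V) {c : ℝ} (hc : 0 ≤ c) : randers W (c • x) = c * randers W x := by
  have hsqrt : √(⟪W, c • x⟫ ^ 2 + (1 - ‖W‖ ^ 2) * ‖c • x‖ ^ 2)
      = c * √(⟪W, x⟫ ^ 2 + (1 - ‖W‖ ^ 2) * ‖x‖ ^ 2) := by
    rw [inner_smul_right, norm_smul, Real.norm_of_nonneg hc,
      show (c * ⟪W, x⟫) ^ 2 + (1 - ‖W‖ ^ 2) * (c * ‖x‖) ^ 2
        = c ^ 2 * (⟪W, x⟫ ^ 2 + (1 - ‖W‖ ^ 2) * ‖x‖ ^ 2) by ring,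
      Real.sqrt_mul (sq_nonneg c), Real.sqrt_sq hc]
  rw [randers_apply, randers_apply, hsqrt, inner_smul_right]
  ring

theorem inner_sq_lt_inner_sq_add_mul_norm_sq (hW : ‖W‖ < 1) {x : V} (hx : x ≠ 0) :
    ⟪W, x⟫ ^ 2 < ⟪W, x⟫ ^ 2 + (1 - ‖W‖ ^ 2) * ‖x‖ ^ 2 := by
  have := mul_pos (one_sub_norm_sq_pos hW) (pow_pos (norm_pos_iff.mpr hx) 2)
  linarith

theorem randers_pos (hW : ‖W‖ < 1) {x : V} (hx : x ≠ 0) : 0 < randers W x := by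
  rw [randers_apply]
  refine div_pos (sub_pos.mpr ?_) (one_sub_norm_sq_pos hW)
  exact (le_abs_self _).trans_lt (Real.lt_sqrt (abs_nonneg _) |>.mpr (by
    rw [sq_abs]; exact inner_sq_lt_inner_sq_add_mul_norm_sq hW hx))

theorem contDiffAt_randers (hW : ‖W‖ < 1) {x : V} (hx : x ≠ 0) {n : WithTop ℕ∞} :
    ContDiffAt ℝ n (randers W) x := by
  have hinner : ContDiff ℝ n (⟪W, ·⟫) := (innerSL ℝ W).contDiff
  rw [show randers W = _ from funext (randers_apply W)]
  refine (ContDiffAt.sqrt ?_ ?_).sub hinner.contDiffAt |>.div_const _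
  · exact ((hinner.pow 2).add (contDiff_const.mul (contDiff_norm_sq ℝ))).contDiffAt
  · exact ((sq_nonneg _).trans_lt (inner_sq_lt_inner_sq_add_mul_norm_sq hW hx)).ne'

theorem norm_sub_randers_smul_sq (hW : ‖W‖ < 1) (x : V) :
    ‖x - randers W x • W‖ ^ 2 = randers W x ^ 2 := by
  have hk := (one_sub_norm_sq_pos hW).ne'
  have hA : 0 ≤ ⟪W, x⟫ ^ 2 + (1 - ‖W‖ ^ 2) * ‖x‖ ^ 2 := by
    have := one_sub_norm_sq_pos hW; positivity
  rw [norm_sub_sq_real, inner_smul_right, norm_smul, Real.norm_eq_abs, mul_pow, sq_abs,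
    real_inner_comm, randers_apply]
  generalize hS : √(⟪W, x⟫ ^ 2 + (1 - ‖W‖ ^ 2) * ‖x‖ ^ 2) = S
  have hS2 : S ^ 2 = ⟪W, x⟫ ^ 2 + (1 - ‖W‖ ^ 2) * ‖x‖ ^ 2 := hS ▸ Real.sq_sqrt hA
  field_simp
  linear_combination -(1 - ‖W‖ ^ 2) * hS2

theorem sub_randers_smul_eq_of_mul_fderiv (hW : ‖W‖ < 1) {x : V} (hx : x ≠ 0) {a : V}
    (ha : ∀ u, randers W x * fderiv ℝ (randers W) x u = ⟪a, u⟫) :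
    x - randers W x • W = (1 + ⟪x - randers W x • W, W⟫ / randers W x) • a := by
  have hZ : HasFDerivAt (randers W) (fderiv ℝ (randers W) x) x :=
    ((contDiffAt_randers hW hx (n := 1)).differentiableAt one_ne_zero).hasFDerivAt
  have hlhs := ((hasFDerivAt_id x).sub (hZ.smul_const W)).norm_sq
  have hrhs := hZ.pow 2
  rw [← funext (norm_sub_randers_smul_sq hW)] at hrhs
  refine ext_inner_right ℝ fun u => ?_
  have hu : ⟪x - randers W x • W, u⟫ - fderiv ℝ (randers W) x u * ⟪x - randers W x • W, W⟫
      = randers W x * fderiv ℝ (randers W) x u := by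
    have h := DFunLike.congr_fun (hlhs.unique hrhs) u
    simp only [smul_apply, ContinuousLinearMap.comp_apply,
      sub_apply, ContinuousLinearMap.id_apply,
      ContinuousLinearMap.smulRight_apply, innerSL_apply_apply, Pi.sub_apply, id_eq,
      inner_sub_right, real_inner_smul_right, nsmul_eq_mul, smul_eq_mul] at h
    linear_combination h / 2
  rw [real_inner_smul_left, add_mul, one_mul, div_mul_eq_mul_div, ← ha u]
  field_simp [(randers_pos hW hx).ne']
  linear_combination hu

theorem randers_eq_of_mul_fderiv_eq_inner_two_smul (hW : ‖W‖ < 1) {x : V} (hx : x ≠ 0)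
    (h : ∀ u, randers W x * fderiv ℝ (randers W) x u = ⟪(2 : ℝ) • W, u⟫) :
    randers W x = 2 * ‖W‖ + 2 * ‖W‖ ^ 2 := by
  have hZ := randers_pos hW hx
  set Z := randers W x
  set w := x - Z • W
  set c := (1 + ⟪w, W⟫ / Z) * 2
  have hw : w = c • W := (sub_randers_smul_eq_of_mul_fderiv hW hx h).trans (smul_smul _ _ _)
  have hnorm : |c| * ‖W‖ = Z := by
    rw [← Real.norm_eq_abs, ← norm_smul, ← hw]
    exact (sq_eq_sq₀ (norm_nonneg w) hZ.le).mp (norm_sub_randers_smul_sq hW x)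
  have hc : c * (Z - 2 * ‖W‖ ^ 2) = 2 * Z := by
    have hinner : ⟪w, W⟫ = c * ‖W‖ ^ 2 := by
      rw [hw, real_inner_smul_left, real_inner_self_eq_norm_sq]
    have hc_def : c = (1 + c * ‖W‖ ^ 2 / Z) * 2 := hinner ▸ rfl
    field_simp at hc_def
    linear_combination hc_def
  exact eq_two_mul_add_two_mul_sq_of_abs_mul_eq (norm_nonneg W) hW.le hZ hnorm hc

end Randers

theorem not_differentiableAt_of_isLocalMin_of_isLocalMin_sub_mul {f : ℝ → ℝ} {a c : ℝ}
    (hc : c ≠ 0) (hf : IsLocalMin f a) (hg : IsLocalMin (fun t => f t - c * t) a) :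
    ¬ DifferentiableAt ℝ f a := by
  intro hd
  have hderiv : HasDerivAt (fun t => f t - c * t) (deriv f a - c) a := by
    simpa using hd.hasDerivAt.fun_sub ((hasDerivAt_id' a).const_mul c)
  rw [hf.deriv_eq_zero, zero_sub] at hderiv
  exact hc (neg_eq_zero.mp (hderiv.deriv.symm.trans hg.deriv_eq_zero))

theorem not_contDiffAt_two_sqrt_add_sq :
    ¬ ContDiffAt ℝ 2 (fun t : ℝ => (2 * Real.sqrt t + 2 * t) ^ 2) 0 := by
  refine fun h => not_differentiableAt_of_isLocalMin_of_isLocalMin_sub_mul four_ne_zero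
    (.of_forall fun t => ?_) (.of_forall fun t => ?_) (h.differentiableAt (by norm_num))
  all_goals norm_num only [Real.sqrt_zero]
  · positivity
  · rcases le_or_gt 0 t with ht | ht
    · nlinarith [Real.sq_sqrt ht, Real.sqrt_nonneg t]
    · rw [Real.sqrt_eq_zero_of_nonpos ht.le]
      nlinarith

theorem randers_transnormal_example_general {V : Type*} [NormedAddCommGroup V]
    [InnerProductSpace ℝ V]
    (p : V) (hp1 : ‖p‖ < 1) (v : V) (hv : v ≠ 0)
    (hgrad : ∀ u : V, fundamentalTensor (randers p) v v u = ⟪(2 : ℝ) • p, u⟫) :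
    randers p v = 2 * ‖p‖ + 2 * ‖p‖ ^ 2 ∧
      randers p v ^ 2 = (2 * Real.sqrt (‖p‖ ^ 2) + 2 * ‖p‖ ^ 2) ^ 2 ∧
      ¬ ContDiffAt ℝ 2 (fun t : ℝ => (2 * Real.sqrt t + 2 * t) ^ 2) 0 := by
  have hZ : randers p v = 2 * ‖p‖ + 2 * ‖p‖ ^ 2 := by
    refine randers_eq_of_mul_fderiv_eq_inner_two_smul hp1 hv fun u => ?_
    rw [← hgrad, fundamentalTensor_self_left_eq_mul_fderiv (fun c hc x => randers_smul p x hc.le)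
      (contDiffAt_randers hp1 hv)]
  exact ⟨hZ, by rw [hZ, Real.sqrt_sq (norm_nonneg p)], not_contDiffAt_two_sqrt_add_sq⟩

/-- Example: on the unit disc with wind `W = p` at the point `p` (with `0 < ‖p‖ < 1`),
if `v` is the `Z`-gradient of `f(x) = ‖x‖²` at `p` (whose Riemannian gradient is `2p`),
then `Z(v) = 2‖p‖ + 2‖p‖²`; in particular `Z(v)² = 𝔟(f(p))` for `𝔟(t) = (2√t + 2t)²`,
and this `𝔟` is not `C²` at `0`. -/
theorem randers_transnormal_example {V : Type*} [NormedAddCommGroup V]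
    [InnerProductSpace ℝ V] [FiniteDimensional ℝ V]
    (p : V) (hp0 : 0 < ‖p‖) (hp1 : ‖p‖ < 1) (v : V) (hv : v ≠ 0)
    (hgrad : ∀ u : V, fundamentalTensor (randers p) v v u = ⟪(2 : ℝ) • p, u⟫) :
    randers p v = 2 * ‖p‖ + 2 * ‖p‖ ^ 2 ∧
      randers p v ^ 2 = (2 * Real.sqrt (‖p‖ ^ 2) + 2 * ‖p‖ ^ 2) ^ 2 ∧
      ¬ ContDiffAt ℝ 2 (fun t : ℝ => (2 * Real.sqrt t + 2 * t) ^ 2) 0 :=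
  randers_transnormal_example_general p hp1 v hv hgrad
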